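/- For every natural number n ≥ 3, the normaliser of the standard cyclic subgroup C_n in SO(3) equals the standard embedded O(2); in particular the Weyl group N_{SO(3)}(C_n)/C_n is infinite. -/

import Mathlib

noncomputable section

/-- `SO(3)`: the special orthogonal group of `3 × 3` real matrices. -/
abbrev SO3 := Matrix.specialOrthogonalGroup (Fin 3) ℝ

noncomputable instance : Group SO3 :=
  { (inferInstance : Monoid SO3) with
    inv := fun A => ⟨star A.1, by
      rw [Matrix.mem_specialOrthogonalGroup_iff]
      refine ⟨Unitary.star_mem A.2.1, ?_⟩
      have h : (A.1).det = 1 := A.2.2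
      rw [Matrix.star_eq_conjTranspose, Matrix.det_conjTranspose, h, star_one]⟩
    inv_mul_cancel := fun A => Subtype.ext A.2.1.1 }

open Real in
/-- The matrix of the rotation by `θ` about the z-axis. -/
def RzMat (θ : ℝ) : Matrix (Fin 3) (Fin 3) ℝ :=
  !![cos θ, -sin θ, 0;
     sin θ,  cos θ, 0;
     0, 0, 1]

lemma RzMat_mem (θ : ℝ) : RzMat θ ∈ Matrix.specialOrthogonalGroup (Fin 3) ℝ := by
  rw [Matrix.mem_specialOrthogonalGroup_iff]
  constructor
  · rw [Matrix.mem_orthogonalGroup_iff]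
    ext i j
    fin_cases i <;> fin_cases j <;>
      simp [RzMat, Matrix.mul_apply, Fin.sum_univ_succ, Matrix.star_eq_conjTranspose,
        Matrix.conjTranspose_apply, Matrix.vecHead, Matrix.vecTail] <;>
      nlinarith [Real.sin_sq_add_cos_sq θ]
  · simp [RzMat, Matrix.det_fin_three]
    nlinarith [Real.sin_sq_add_cos_sq θ]

/-- The rotation by `θ` about the z-axis, as an element of SO(3). -/
def Rz (θ : ℝ) : SO3 := ⟨RzMat θ, RzMat_mem θ⟩

/-- The matrix `diag (1, -1, -1)`. -/
def rhoMat : Matrix (Fin 3) (Fin 3) ℝ := !![1,0,0; 0,-1,0; 0,0,-1]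

lemma rhoMat_mem : rhoMat ∈ Matrix.specialOrthogonalGroup (Fin 3) ℝ := by
  rw [Matrix.mem_specialOrthogonalGroup_iff]
  constructor
  · rw [Matrix.mem_orthogonalGroup_iff]
    ext i j
    fin_cases i <;> fin_cases j <;>
      simp [rhoMat, Matrix.mul_apply, Fin.sum_univ_succ, Matrix.star_eq_conjTranspose,
        Matrix.conjTranspose_apply, Matrix.vecHead, Matrix.vecTail]
  · simp [rhoMat, Matrix.det_fin_three]

/-- `ρ = diag (1, -1, -1)`, the rotation by `π` about the x-axis, as an element of SO(3). -/
def ρ : SO3 := ⟨rhoMat, rhoMat_mem⟩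

lemma Rz_add (a b : ℝ) : Rz a * Rz b = Rz (a + b) := by
  apply Subtype.ext
  show RzMat a * RzMat b = RzMat (a + b)
  ext i j
  fin_cases i <;> fin_cases j <;>
    simp [RzMat, Matrix.mul_apply, Fin.sum_univ_succ, Matrix.vecHead, Matrix.vecTail,
      Real.cos_add, Real.sin_add] <;> ring

lemma Rz_zero : Rz 0 = 1 := by
  apply Subtype.ext
  show RzMat 0 = 1
  ext i j
  fin_cases i <;> fin_cases j <;>
    simp [RzMat, Matrix.one_apply, Matrix.vecHead, Matrix.vecTail]

lemma rho_sq : ρ * ρ = 1 := by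
  apply Subtype.ext
  show rhoMat * rhoMat = 1
  ext i j
  fin_cases i <;> fin_cases j <;>
    simp [rhoMat, Matrix.mul_apply, Fin.sum_univ_succ, Matrix.one_apply,
      Matrix.vecHead, Matrix.vecTail]

lemma Rz_rho (θ : ℝ) : Rz θ * ρ = ρ * Rz (-θ) := by
  apply Subtype.ext
  show RzMat θ * rhoMat = rhoMat * RzMat (-θ)
  ext i j
  fin_cases i <;> fin_cases j <;>
    simp [RzMat, rhoMat, Matrix.mul_apply, Fin.sum_univ_succ,
      Matrix.vecHead, Matrix.vecTail]

lemma Rz_inv (θ : ℝ) : (Rz θ)⁻¹ = Rz (-θ) := by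
  symm
  rw [eq_inv_iff_mul_eq_one, Rz_add]
  simpa using Rz_zero

lemma rho_inv : ρ⁻¹ = ρ := inv_eq_of_mul_eq_one_right rho_sq
/-- The standard maximal torus `SO(2) ⊆ SO(3)`, consisting of all rotations
about the z-axis. -/
def SO2 : Subgroup SO3 where
  carrier := Set.range Rz
  one_mem' := ⟨0, Rz_zero⟩
  mul_mem' := by
    rintro _ _ ⟨a, rfl⟩ ⟨b, rfl⟩
    exact ⟨a + b, (Rz_add a b).symm⟩
  inv_mem' := by
    rintro _ ⟨a, rfl⟩
    exact ⟨-a, (Rz_inv a).symm⟩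

/-- The standard embedded `O(2) ⊆ SO(3)`, consisting of all `Rz θ` together with
all `ρ * Rz θ`. -/
def O2 : Subgroup SO3 where
  carrier := {g | ∃ θ : ℝ, g = Rz θ ∨ g = ρ * Rz θ}
  one_mem' := ⟨0, Or.inl Rz_zero.symm⟩
  mul_mem' := by
    rintro x y ⟨a, (rfl | rfl)⟩ ⟨b, (rfl | rfl)⟩
    · exact ⟨a + b, Or.inl (Rz_add a b)⟩
    · refine ⟨-a + b, Or.inr ?_⟩
      rw [← mul_assoc, Rz_rho, mul_assoc, Rz_add]
    · refine ⟨a + b, Or.inr ?_⟩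
      rw [mul_assoc, Rz_add]
    · refine ⟨-a + b, Or.inl ?_⟩
      rw [← mul_assoc, mul_assoc ρ (Rz a) ρ, Rz_rho, ← mul_assoc, rho_sq,
        one_mul, Rz_add]
  inv_mem' := by
    rintro x ⟨a, (rfl | rfl)⟩
    · exact ⟨-a, Or.inl (Rz_inv a)⟩
    · refine ⟨a, Or.inr ?_⟩
      rw [mul_inv_rev, Rz_inv, rho_inv, Rz_rho, neg_neg]
/-- The standard cyclic subgroup `C_n ⊆ SO(3)` of order `n`, generated by `Rz (2π/n)`. -/
def Cn (n : ℕ) : Subgroup SO3 := Subgroup.closure {Rz (2 * Real.pi / n)}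


open Real in
lemma Rz_pow (θ : ℝ) (m : ℕ) : (Rz θ)^m = Rz (m * θ) := by
  induction m with
  | zero => simpa using Rz_zero.symm
  | succ k ih =>
      rw [pow_succ, ih, Rz_add]
      congr 1
      push_cast
      ring

lemma Rz_zpow (θ : ℝ) (k : ℤ) : (Rz θ)^k = Rz (k * θ) := by
  cases k with
  | ofNat m => simpa using Rz_pow θ m
  | negSucc m =>
      rw [zpow_negSucc, Rz_pow, Rz_inv]
      congr 1
      push_cast
      ring

lemma mem_Cn {n : ℕ} {h : SO3} :
    h ∈ Cn n ↔ ∃ k : ℤ, h = Rz (k * (2 * Real.pi / n)) := by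
  rw [Cn, Subgroup.mem_closure_singleton]
  constructor
  · rintro ⟨k, rfl⟩; exact ⟨k, Rz_zpow _ k⟩
  · rintro ⟨k, rfl⟩; exact ⟨k, Rz_zpow _ k⟩
lemma rho_Rz_rho (t : ℝ) : ρ * (Rz t * ρ) = Rz (-t) := by
  rw [Rz_rho, ← mul_assoc, rho_sq, one_mul]

lemma conj_mem_Cn {n : ℕ} {g : SO3} (hg : g ∈ O2) {h : SO3} (hh : h ∈ Cn n) :
    g * h * g⁻¹ ∈ Cn n := by
  obtain ⟨k, rfl⟩ := mem_Cn.mp hh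
  set β := (k : ℝ) * (2 * Real.pi / n) with hβ
  obtain ⟨a, (rfl | rfl)⟩ := hg
  · rw [Rz_inv, Rz_add, Rz_add]
    exact mem_Cn.mpr ⟨k, by rw [hβ]; ring_nf⟩
  · rw [mul_inv_rev, Rz_inv, rho_inv]
    have e1 : Rz a * Rz β * Rz (-a) = Rz β := by
      rw [Rz_add, Rz_add]; congr 1; ring
    have e2 : ρ * Rz a * Rz β * (Rz (-a) * ρ) = ρ * (Rz β * ρ) := by
      simp only [mul_assoc]
      congr 1
      rw [← mul_assoc, ← mul_assoc, e1]
    rw [e2, rho_Rz_rho]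
    exact mem_Cn.mpr ⟨-k, by rw [hβ]; push_cast; ring_nf⟩

lemma O2_le_normalizer (n : ℕ) : O2 ≤ (Subgroup.normalizer (Cn n : Set SO3)) := by
  intro g hg
  rw [Subgroup.mem_normalizer_iff]
  intro h
  constructor
  · intro hh; exact conj_mem_Cn hg hh
  · intro hh
    have := conj_mem_Cn (O2.inv_mem hg) hh
    simpa [mul_assoc] using this
lemma exists_cos_sin {a b : ℝ} (h : a^2 + b^2 = 1) :
    ∃ θ, Real.cos θ = a ∧ Real.sin θ = b := by
  have ha1 : -1 ≤ a := by nlinarith [sq_nonneg b]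
  have ha2 : a ≤ 1 := by nlinarith [sq_nonneg b]
  have hab : 1 - a^2 = b^2 := by linarith
  rcases le_or_gt 0 b with hb | hb
  · refine ⟨Real.arccos a, Real.cos_arccos ha1 ha2, ?_⟩
    rw [Real.sin_arccos, hab, Real.sqrt_sq hb]
  · refine ⟨-Real.arccos a, ?_, ?_⟩
    · rw [Real.cos_neg]; exact Real.cos_arccos ha1 ha2
    · rw [Real.sin_neg, Real.sin_arccos, hab, Real.sqrt_sq_eq_abs, abs_of_neg hb, neg_neg]

lemma trace_RzMat (θ : ℝ) : Matrix.trace (RzMat θ) = 2 * Real.cos θ + 1 := by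
  simp [RzMat, Matrix.trace_fin_three]
  ring

set_option maxHeartbeats 1000000 in
lemma normalizer_le_O2 {n : ℕ} (hn : 3 ≤ n) : (Subgroup.normalizer (Cn n : Set SO3)) ≤ O2 := by
  intro g hg
  set θ₀ := 2 * Real.pi / n with hθ₀
  have hnpos : (0:ℝ) < n := by positivity
  have hθpos : 0 < θ₀ := by
    rw [hθ₀]; positivity
  have hθlt : θ₀ < Real.pi := by
    rw [hθ₀, div_lt_iff₀ hnpos]
    have h3 : (3:ℝ) ≤ n := by exact_mod_cast hn
    nlinarith [Real.pi_pos]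
  have hc1 : Real.cos θ₀ < 1 := by
    calc Real.cos θ₀ < Real.cos 0 := by
          apply Real.cos_lt_cos_of_nonneg_of_le_pi le_rfl hθlt.le hθpos
      _ = 1 := Real.cos_zero
  -- conjugate the generator
  have hx : Rz θ₀ ∈ Cn n := mem_Cn.mpr ⟨1, by norm_num [hθ₀]⟩
  have hconj : g * Rz θ₀ * g⁻¹ ∈ Cn n := (Subgroup.mem_normalizer_iff.mp hg _).mp hx
  obtain ⟨k, hk⟩ := mem_Cn.mp hconj
  set ψ := (k:ℝ) * θ₀ with hψ
  -- trace : cos ψ = cos θ₀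
  have hstar : (g⁻¹).1 = star g.1 := rfl
  have hU1 : star g.1 * g.1 = 1 := g.2.1.1
  have hU2 : g.1 * star g.1 = 1 := g.2.1.2
  have hdet : g.1.det = 1 := g.2.2
  have hmatconj : g.1 * RzMat θ₀ * star g.1 = RzMat ψ := by
    have := congrArg Subtype.val hk
    simpa [hstar, Rz] using this
  have htr : Real.cos ψ = Real.cos θ₀ := by
    have h1 : Matrix.trace (g.1 * RzMat θ₀ * star g.1) = Matrix.trace (RzMat θ₀) := by
      rw [Matrix.trace_mul_comm, ← mul_assoc, hU1, one_mul]
    rw [hmatconj, trace_RzMat, trace_RzMat] at h1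
    linarith
  have hmat : g.1 * RzMat θ₀ = RzMat ψ * g.1 := by
    have h2 := congrArg (fun M => M * g.1) hmatconj
    simpa [mul_assoc, hU1] using h2
  -- entry equations from hmat at column 2
  have e0 : g.1 0 2 = Real.cos θ₀ * g.1 0 2 - Real.sin ψ * g.1 1 2 := by
    have h := congrFun (congrFun hmat 0) 2
    simp [RzMat, Matrix.mul_apply, Fin.sum_univ_succ, Matrix.vecHead, Matrix.vecTail] at h
    rw [htr] at h
    linear_combination h
  have e1 : g.1 1 2 = Real.sin ψ * g.1 0 2 + Real.cos θ₀ * g.1 1 2 := by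
    have h := congrFun (congrFun hmat 1) 2
    simp [RzMat, Matrix.mul_apply, Fin.sum_univ_succ, Matrix.vecHead, Matrix.vecTail] at h
    rw [htr] at h
    linear_combination h
  have hP : Real.sin ψ ^ 2 + Real.cos θ₀ ^ 2 = 1 := by
    have := Real.sin_sq_add_cos_sq ψ
    rw [htr] at this; exact this
  have h02 : g.1 0 2 = 0 := by
    have key : (2 - 2 * Real.cos θ₀) * g.1 0 2 = 0 := by
      linear_combination (1 - Real.cos θ₀) * e0 - Real.sin ψ * e1 - g.1 0 2 * hP
    have hne : (2 - 2 * Real.cos θ₀) ≠ 0 := by linarith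
    exact (mul_eq_zero.mp key).resolve_left hne
  have h12 : g.1 1 2 = 0 := by
    have key : (2 - 2 * Real.cos θ₀) * g.1 1 2 = 0 := by
      linear_combination Real.sin ψ * e0 + (1 - Real.cos θ₀) * e1 - g.1 1 2 * hP
    have hne : (2 - 2 * Real.cos θ₀) ≠ 0 := by linarith
    exact (mul_eq_zero.mp key).resolve_left hne
  -- orthogonality entry equations
  have c22 : g.1 0 2 ^ 2 + g.1 1 2 ^ 2 + g.1 2 2 ^ 2 = 1 := by
    have h := congrFun (congrFun hU1 2) 2
    simp [Matrix.mul_apply, Fin.sum_univ_succ, Matrix.star_eq_conjTranspose,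
      Matrix.conjTranspose_apply, Matrix.one_apply] at h
    linear_combination h
  have r22 : g.1 2 0 ^ 2 + g.1 2 1 ^ 2 + g.1 2 2 ^ 2 = 1 := by
    have h := congrFun (congrFun hU2 2) 2
    simp [Matrix.mul_apply, Fin.sum_univ_succ, Matrix.star_eq_conjTranspose,
      Matrix.conjTranspose_apply, Matrix.one_apply] at h
    linear_combination h
  have hsq : g.1 2 2 ^ 2 = 1 := by rw [h02, h12] at c22; linarith
  have h22 : g.1 2 2 = 1 ∨ g.1 2 2 = -1 := by
    apply mul_self_eq_one_iff.mp
    linear_combination hsq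
  have h20 : g.1 2 0 = 0 := by nlinarith [r22, hsq, sq_nonneg (g.1 2 1)]
  have h21 : g.1 2 1 = 0 := by nlinarith [r22, hsq, sq_nonneg (g.1 2 0)]
  have c00 : g.1 0 0 ^ 2 + g.1 1 0 ^ 2 + g.1 2 0 ^ 2 = 1 := by
    have h := congrFun (congrFun hU1 0) 0
    simp [Matrix.mul_apply, Fin.sum_univ_succ, Matrix.star_eq_conjTranspose,
      Matrix.conjTranspose_apply, Matrix.one_apply] at h
    linear_combination h
  have c01 : g.1 0 0 * g.1 0 1 + g.1 1 0 * g.1 1 1 + g.1 2 0 * g.1 2 1 = 0 := by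
    have h := congrFun (congrFun hU1 0) 1
    simp [Matrix.mul_apply, Fin.sum_univ_succ, Matrix.star_eq_conjTranspose,
      Matrix.conjTranspose_apply, Matrix.one_apply] at h
    linear_combination h
  have c11 : g.1 0 1 ^ 2 + g.1 1 1 ^ 2 + g.1 2 1 ^ 2 = 1 := by
    have h := congrFun (congrFun hU1 1) 1
    simp [Matrix.mul_apply, Fin.sum_univ_succ, Matrix.star_eq_conjTranspose,
      Matrix.conjTranspose_apply, Matrix.one_apply] at h
    linear_combination h
  have e1' : g.1 0 0 ^ 2 + g.1 1 0 ^ 2 = 1 := by rw [h20] at c00; linarith [c00]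
  have e2' : g.1 0 0 * g.1 0 1 + g.1 1 0 * g.1 1 1 = 0 := by
    rw [h20, h21] at c01; linarith [c01]
  have e4' : g.1 0 1 ^ 2 + g.1 1 1 ^ 2 = 1 := by rw [h21] at c11; linarith [c11]
  have hdet2 : g.1 2 2 * (g.1 0 0 * g.1 1 1 - g.1 0 1 * g.1 1 0) = 1 := by
    rw [Matrix.det_fin_three, h02, h12, h20, h21] at hdet
    linear_combination hdet
  rcases h22 with hc | hc
  · -- rotation case
    have e3 : g.1 0 0 * g.1 1 1 - g.1 0 1 * g.1 1 0 = 1 := by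
      rw [hc] at hdet2; linarith
    have hg11 : g.1 1 1 = g.1 0 0 := by
      linear_combination g.1 0 0 * e3 + g.1 1 0 * e2' - g.1 1 1 * e1'
    have hg01 : g.1 0 1 = -g.1 1 0 := by
      linear_combination g.1 0 0 * e2' - g.1 1 0 * e3 - g.1 0 1 * e1'
    obtain ⟨θ, hcos, hsin⟩ := exists_cos_sin e1'
    refine ⟨θ, Or.inl ?_⟩
    apply Subtype.ext
    show g.1 = RzMat θ
    ext i j
    fin_cases i <;> fin_cases j <;>
      simp [RzMat, hcos, hsin, h02, h12, h20, h21, hg01, hg11, hc]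
  · -- reflection case
    have e3 : g.1 0 0 * g.1 1 1 - g.1 0 1 * g.1 1 0 = -1 := by
      rw [hc] at hdet2; linarith
    have hg11 : g.1 1 1 = -g.1 0 0 := by
      linear_combination g.1 0 0 * e3 + g.1 1 0 * e2' - g.1 1 1 * e1'
    have hg01 : g.1 0 1 = g.1 1 0 := by
      linear_combination g.1 0 0 * e2' - g.1 1 0 * e3 - g.1 0 1 * e1'
    obtain ⟨θ, hcos, hsin⟩ := exists_cos_sin (a := g.1 0 0) (b := -g.1 1 0)
      (by linear_combination e1')
    refine ⟨θ, Or.inr ?_⟩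
    apply Subtype.ext
    show g.1 = rhoMat * RzMat θ
    ext i j
    fin_cases i <;> fin_cases j <;>
      simp [RzMat, rhoMat, Matrix.mul_apply, Fin.sum_univ_succ, Matrix.vecHead,
        Matrix.vecTail, hcos, hsin, h02, h12, h20, h21, hg01, hg11, hc]
lemma Rz_two_pi : Rz (2 * Real.pi) = 1 := by
  apply Subtype.ext
  show RzMat (2 * Real.pi) = 1
  ext i j
  fin_cases i <;> fin_cases j <;>
    simp [RzMat, Matrix.one_apply, Real.cos_two_pi, Real.sin_two_pi,
      Matrix.vecHead, Matrix.vecTail]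

lemma finite_Cn {n : ℕ} (hn : 3 ≤ n) : Finite (Cn n) := by
  have hord : IsOfFinOrder (Rz (2 * Real.pi / n)) := by
    rw [isOfFinOrder_iff_pow_eq_one]
    refine ⟨n, by omega, ?_⟩
    rw [Rz_pow]
    have hne : (n : ℝ) ≠ 0 := by positivity
    rw [show (n : ℝ) * (2 * Real.pi / n) = 2 * Real.pi by field_simp]
    exact Rz_two_pi
  have : Cn n = Subgroup.zpowers (Rz (2 * Real.pi / n)) := by
    rw [Cn, Subgroup.zpowers_eq_closure]
  rw [this]
  exact hord.finite_zpowers.to_subtype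

lemma Rz_injective_cos {a b : ℝ} (h : Rz a = Rz b) : Real.cos a = Real.cos b := by
  have := congrArg (fun m : SO3 => m.1 0 0) h
  simpa [Rz, RzMat] using this

lemma infinite_O2 : Infinite O2 := by
  refine Infinite.of_injective
    (fun k : ℕ => (⟨Rz (1 / (k + 1)), ⟨1 / (k + 1), Or.inl rfl⟩⟩ : O2)) ?_
  intro j k hjk
  have h := Rz_injective_cos (congrArg Subtype.val hjk)
  have hmem : ∀ m : ℕ, (1 : ℝ) / (m + 1) ∈ Set.Icc 0 Real.pi := by
    intro m
    constructor
    · positivity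
    · have h1 : (1:ℝ) / (m+1) ≤ 1 := by
        rw [div_le_one (by positivity)]
        linarith [Nat.cast_nonneg (α := ℝ) m]
      linarith [Real.pi_gt_three]
  have h2 := Real.injOn_cos (hmem j) (hmem k) h
  field_simp at h2
  exact_mod_cast (by linarith : (j:ℝ) = k)
/-- For every `n ≥ 3`, the normaliser of the standard cyclic subgroup `C_n` in `SO(3)`
is the standard embedded `O(2)`; in particular the Weyl group `N_{SO(3)}(C_n) / C_n`
is infinite. -/
theorem normalizer_Cn_eq_O2 (n : ℕ) (hn : 3 ≤ n) :
    (Subgroup.normalizer (Cn n : Set SO3)) = O2 ∧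
      Infinite ((Subgroup.normalizer (Cn n : Set SO3)) ⧸ (Cn n).subgroupOf (Subgroup.normalizer (Cn n : Set SO3))) := by
  have h1 : (Subgroup.normalizer (Cn n : Set SO3)) = O2 :=
    le_antisymm (normalizer_le_O2 hn) (O2_le_normalizer n)
  refine ⟨h1, ?_⟩
  have hfinCn : Finite (Cn n) := finite_Cn hn
  have hfinSub : Finite ((Cn n).subgroupOf (Subgroup.normalizer (Cn n : Set SO3))) := by
    refine Finite.of_injective (fun x => (⟨x.1.1, x.2⟩ : Cn n)) ?_
    intro a b hab
    simp only [Subtype.mk.injEq] at hab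
    exact Subtype.ext (Subtype.ext (congrArg (fun y : Cn n => (y : SO3)) hab))
  have hinfN : Infinite ((Subgroup.normalizer (Cn n : Set SO3))) := by
    rw [h1]; exact infinite_O2
  rw [← not_finite_iff_infinite]
  intro hfinQ
  have : Finite ((Subgroup.normalizer (Cn n : Set SO3))) :=
    Finite.of_equiv _
      (Subgroup.groupEquivQuotientProdSubgroup
        (s := (Cn n).subgroupOf (Subgroup.normalizer (Cn n : Set SO3)))).symm
  exact not_finite ((Subgroup.normalizer (Cn n : Set SO3)))

end
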